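/- arXiv:1107.4559 — 6 statements merged into one kernel-verified Lean document; each statement's English description precedes it below -/
import Mathlib

section
/- Let S be an LA-semigroup and let B₁, B₂, B₃ be BVF-subsets of S. Then the product of BVF-subsets satisfies the left invertive law: (B₁∘B₂)∘B₃ = (B₃∘B₂)∘B₁, i.e. ((μ₁⁺∘μ₂⁺)∘μ₃⁺)(x) = ((μ₃⁺∘μ₂⁺)∘μ₁⁺)(x) and ((μ₁⁻∘μ₂⁻)∘μ₃⁻)(x) = ((μ₃⁻∘μ₂⁻)∘μ₁⁻)(x) for all x ∈ S. Hence the set of all BVF-subsets of S under ∘ is itself an LA-semigroup. -/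
open Classical in
/-- Positive component of the product of two bipolar-valued fuzzy subsets:
`sup { min (f y) (g z) : x = y * z }` if `x` factors, and `0` otherwise. -/
noncomputable def prodPos {S : Type*} [Mul S] (f g : S → ℝ) (x : S) : ℝ :=
  if ∃ y z : S, x = y * z then
    sSup {r : ℝ | ∃ y z : S, x = y * z ∧ r = min (f y) (g z)}
  else 0

open Classical in
/-- Negative component of the product of two bipolar-valued fuzzy subsets:
`inf { max (f y) (g z) : x = y * z }` if `x` factors, and `0` otherwise. -/
noncomputable def prodNeg {S : Type*} [Mul S] (f g : S → ℝ) (x : S) : ℝ :=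
  if ∃ y z : S, x = y * z then
    sInf {r : ℝ | ∃ y z : S, x = y * z ∧ r = max (f y) (g z)}
  else 0


section Helpers

variable {S : Type*} [Mul S]

private lemma bvf_bdd (F G : S → ℝ) (hF : ∀ s, F s ≤ 1) (x : S) :
    BddAbove {r : ℝ | ∃ y z : S, x = y * z ∧ r = min (F y) (G z)} :=
  ⟨1, fun r ⟨y, _, _, hr⟩ => hr ▸ (min_le_left _ _).trans (hF y)⟩

private lemma bvf_min_le_prodPos (F G : S → ℝ) (hF : ∀ s, F s ≤ 1)
    {x y z : S} (hx : x = y * z) : min (F y) (G z) ≤ prodPos F G x := by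
  rw [prodPos, if_pos ⟨y, z, hx⟩]
  exact le_csSup (bvf_bdd F G hF x) ⟨y, z, hx, rfl⟩

private lemma bvf_prodPos_nonneg (F G : S → ℝ) (hF : ∀ s, F s ∈ Set.Icc (0:ℝ) 1)
    (hG : ∀ s, G s ∈ Set.Icc (0:ℝ) 1) (x : S) : 0 ≤ prodPos F G x := by
  rw [prodPos]
  split_ifs with hfac
  · obtain ⟨y, z, hx⟩ := hfac
    refine le_trans ?_ (le_csSup (bvf_bdd F G (fun s => (hF s).2) x) ⟨y, z, hx, rfl⟩)
    exact le_min (hF y).1 (hG z).1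
  · exact le_refl 0

private lemma bvf_prodPos_le_one (F G : S → ℝ) (hF : ∀ s, F s ∈ Set.Icc (0:ℝ) 1)
    (hG : ∀ s, G s ∈ Set.Icc (0:ℝ) 1) (x : S) : prodPos F G x ≤ 1 := by
  rw [prodPos]
  split_ifs with hfac
  · obtain ⟨y, z, hx⟩ := hfac
    refine csSup_le ⟨_, ⟨y, z, hx, rfl⟩⟩ ?_
    rintro r ⟨a, b, _, rfl⟩
    exact (min_le_left _ _).trans (hF a).2
  · exact zero_le_one

private lemma bvf_key (hinv : ∀ a b c : S, a * b * c = c * b * a)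
    (f g h : S → ℝ)
    (hf : ∀ s, f s ∈ Set.Icc (0:ℝ) 1) (hg : ∀ s, g s ∈ Set.Icc (0:ℝ) 1)
    (hh : ∀ s, h s ∈ Set.Icc (0:ℝ) 1) (x : S) :
    prodPos (prodPos f g) h x ≤ prodPos (prodPos h g) f x := by
  have hfg : ∀ s, prodPos f g s ∈ Set.Icc (0:ℝ) 1 :=
    fun s => ⟨bvf_prodPos_nonneg f g hf hg s, bvf_prodPos_le_one f g hf hg s⟩
  have hhg : ∀ s, prodPos h g s ∈ Set.Icc (0:ℝ) 1 :=
    fun s => ⟨bvf_prodPos_nonneg h g hh hg s, bvf_prodPos_le_one h g hh hg s⟩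
  rw [prodPos, prodPos]
  split_ifs with hfac
  · -- both sides are sSup's
    set A' := {r : ℝ | ∃ y z : S, x = y * z ∧ r = min (prodPos h g y) (f z)} with hA'
    obtain ⟨y₀, z₀, hx₀⟩ := hfac
    have hbddA' : BddAbove A' := bvf_bdd _ _ (fun s => (hhg s).2) x
    have hsupA'_nonneg : (0:ℝ) ≤ sSup A' := by
      refine le_trans ?_ (le_csSup hbddA' ⟨y₀, z₀, hx₀, rfl⟩)
      exact le_min (hhg y₀).1 (hf z₀).1
    refine csSup_le ⟨_, ⟨y₀, z₀, hx₀, rfl⟩⟩ ?_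
    rintro r ⟨y, z, hx, rfl⟩
    -- claim: for any factorization y = a*b,
    have claim : ∀ a b : S, y = a * b → min (min (f a) (g b)) (h z) ≤ sSup A' := by
      intro a b hy
      have hx' : x = z * b * a := by rw [hx, hy, hinv]
      have mem' : min (prodPos h g (z * b)) (f a) ∈ A' := ⟨z * b, a, hx', rfl⟩
      refine le_trans ?_ (le_csSup hbddA' mem')
      have h1 : min (h z) (g b) ≤ prodPos h g (z * b) :=
        bvf_min_le_prodPos h g (fun s => (hh s).2) rfl
      refine le_min (le_trans (le_min ?_ ?_) h1) ?_
      · exact min_le_right _ _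
      · exact (min_le_left _ _).trans (min_le_right _ _)
      · exact (min_le_left _ _).trans (min_le_left _ _)
    by_cases hy : ∃ a b : S, y = a * b
    · rw [prodPos, if_pos hy]
      set B := {r : ℝ | ∃ a b : S, y = a * b ∧ r = min (f a) (g b)} with hB
      obtain ⟨a₀, b₀, hy₀⟩ := hy
      have hBne : B.Nonempty := ⟨_, ⟨a₀, b₀, hy₀, rfl⟩⟩
      have hBbdd : BddAbove B := bvf_bdd f g (fun s => (hf s).2) y
      rcases le_or_gt (sSup B) (h z) with hle | hlt
      · rw [min_eq_left hle]
        refine csSup_le hBne ?_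
        rintro s ⟨a, b, hy', rfl⟩
        have hs : min (f a) (g b) ≤ h z := le_trans (le_csSup hBbdd ⟨a, b, hy', rfl⟩) hle
        have := claim a b hy'
        rwa [min_eq_left hs] at this
      · rw [min_eq_right hlt.le]
        obtain ⟨s, hsB, hzs⟩ := exists_lt_of_lt_csSup hBne hlt
        obtain ⟨a, b, hy', rfl⟩ := hsB
        have := claim a b hy'
        rwa [min_eq_right hzs.le] at this
    · rw [prodPos, if_neg hy]
      exact le_trans (min_le_left _ _) hsupA'_nonneg
  · exact le_refl 0

private lemma bvf_neg (F G : S → ℝ) (x : S) :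
    prodNeg F G x = -prodPos (fun s => -F s) (fun s => -G s) x := by
  rw [prodNeg, prodPos]
  split_ifs with hfac
  · rw [Real.sInf_def]
    congr 2
    ext r
    simp only [Set.mem_neg, Set.mem_setOf_eq]
    constructor
    · rintro ⟨y, z, hx, hr⟩
      exact ⟨y, z, hx, by rw [← neg_neg r, hr]; exact (min_neg_neg _ _).symm⟩
    · rintro ⟨y, z, hx, hr⟩
      exact ⟨y, z, hx, by rw [hr, min_neg_neg, neg_neg]⟩
  · simp

end Helpers

theorem bvf_product_left_invertive {S : Type*} [Mul S]
    (hinv : ∀ a b c : S, a * b * c = c * b * a)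
    (μ1p μ2p μ3p μ1n μ2n μ3n : S → ℝ)
    (hμ1p : ∀ x : S, μ1p x ∈ Set.Icc (0 : ℝ) 1)
    (hμ2p : ∀ x : S, μ2p x ∈ Set.Icc (0 : ℝ) 1)
    (hμ3p : ∀ x : S, μ3p x ∈ Set.Icc (0 : ℝ) 1)
    (hμ1n : ∀ x : S, μ1n x ∈ Set.Icc (-1 : ℝ) 0)
    (hμ2n : ∀ x : S, μ2n x ∈ Set.Icc (-1 : ℝ) 0)
    (hμ3n : ∀ x : S, μ3n x ∈ Set.Icc (-1 : ℝ) 0) :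
    (∀ x : S, prodPos (prodPos μ1p μ2p) μ3p x = prodPos (prodPos μ3p μ2p) μ1p x) ∧
    (∀ x : S, prodNeg (prodNeg μ1n μ2n) μ3n x = prodNeg (prodNeg μ3n μ2n) μ1n x) := by
  constructor
  · intro x
    exact le_antisymm (bvf_key hinv μ1p μ2p μ3p hμ1p hμ2p hμ3p x)
      (bvf_key hinv μ3p μ2p μ1p hμ3p hμ2p hμ1p x)
  · intro x
    have h1 : ∀ s, (-μ1n s) ∈ Set.Icc (0:ℝ) 1 := fun s =>
      ⟨neg_nonneg.2 (hμ1n s).2, by linarith [(hμ1n s).1]⟩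
    have h2 : ∀ s, (-μ2n s) ∈ Set.Icc (0:ℝ) 1 := fun s =>
      ⟨neg_nonneg.2 (hμ2n s).2, by linarith [(hμ2n s).1]⟩
    have h3 : ∀ s, (-μ3n s) ∈ Set.Icc (0:ℝ) 1 := fun s =>
      ⟨neg_nonneg.2 (hμ3n s).2, by linarith [(hμ3n s).1]⟩
    have e12 : (fun s => -(prodNeg μ1n μ2n) s) = prodPos (fun s => -μ1n s) (fun s => -μ2n s) := by
      funext s; rw [bvf_neg, neg_neg]
    have e32 : (fun s => -(prodNeg μ3n μ2n) s) = prodPos (fun s => -μ3n s) (fun s => -μ2n s) := by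
      funext s; rw [bvf_neg, neg_neg]
    rw [bvf_neg (prodNeg μ1n μ2n) μ3n x, bvf_neg (prodNeg μ3n μ2n) μ1n x]
    congr 1
    have key12 : ∀ s, prodPos (fun t => -μ1n t) (fun t => -μ2n t) s ∈ Set.Icc (0:ℝ) 1 :=
      fun s => ⟨bvf_prodPos_nonneg _ _ h1 h2 s, bvf_prodPos_le_one _ _ h1 h2 s⟩
    rw [show (fun s => -(prodNeg μ1n μ2n s)) = prodPos (fun s => -μ1n s) (fun s => -μ2n s) from e12,
        show (fun s => -(prodNeg μ3n μ2n s)) = prodPos (fun s => -μ3n s) (fun s => -μ2n s) from e32]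
    exact le_antisymm
      (bvf_key hinv _ _ _ h1 h2 h3 x)
      (bvf_key hinv _ _ _ h3 h2 h1 x)
end

section
/- Let S be an LA-semigroup and let B₁, B₂, B₃, B₄ be BVF-subsets of S. Then the medial law holds for the product of BVF-subsets: (B₁∘B₂)∘(B₃∘B₄) = (B₁∘B₃)∘(B₂∘B₄), in both the positive and the negative components. -/
section Aux

variable {S : Type*} [Mul S]

lemma prodPos_set_bddAbove (f g : S → ℝ) (hf : ∀ x, f x ≤ 1) (x : S) :
    BddAbove {r : ℝ | ∃ y z : S, x = y * z ∧ r = min (f y) (g z)} := by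
  refine ⟨1, ?_⟩
  rintro r ⟨y, z, _, rfl⟩
  exact le_trans (min_le_left _ _) (hf y)

lemma prodPos_nonneg (f g : S → ℝ) (hf : ∀ x, 0 ≤ f x) (hg : ∀ x, 0 ≤ g x) (x : S) :
    0 ≤ prodPos f g x := by
  unfold prodPos
  split
  · exact Real.sSup_nonneg (by rintro r ⟨y, z, _, rfl⟩; exact le_min (hf y) (hg z))
  · exact le_refl 0

lemma prodPos_le_one (f g : S → ℝ) (hf : ∀ x, f x ≤ 1) (x : S) :
    prodPos f g x ≤ 1 := by
  unfold prodPos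
  split
  · refine Real.sSup_le ?_ zero_le_one
    rintro r ⟨y, z, _, rfl⟩
    exact le_trans (min_le_left _ _) (hf y)
  · exact zero_le_one

lemma prodPos_eq_of_exists (f g : S → ℝ) {x : S} (hx : ∃ y z : S, x = y * z) :
    prodPos f g x = sSup {r : ℝ | ∃ y z : S, x = y * z ∧ r = min (f y) (g z)} := by
  rw [prodPos, if_pos hx]

lemma min_le_prodPos (f g : S → ℝ) (hf : ∀ x, f x ≤ 1) (y z : S) :
    min (f y) (g z) ≤ prodPos f g (y * z) := by
  unfold prodPos
  rw [if_pos ⟨y, z, rfl⟩]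
  exact le_csSup (prodPos_set_bddAbove f g hf _) ⟨y, z, rfl, rfl⟩

lemma medial_eq (hinv : ∀ a b c : S, a * b * c = c * b * a) (a b c d : S) :
    (a * b) * (c * d) = (a * c) * (b * d) := by
  rw [hinv a b (c * d), hinv c d b, hinv (b * d) c a]

lemma prodPos_medial_le (hinv : ∀ a b c : S, a * b * c = c * b * a)
    (f g h k : S → ℝ)
    (hf0 : ∀ x, 0 ≤ f x) (hf1 : ∀ x, f x ≤ 1)
    (hg0 : ∀ x, 0 ≤ g x) (hg1 : ∀ x, g x ≤ 1)
    (hh0 : ∀ x, 0 ≤ h x) (hh1 : ∀ x, h x ≤ 1)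
    (hk0 : ∀ x, 0 ≤ k x) (hk1 : ∀ x, k x ≤ 1) (x : S) :
    prodPos (prodPos f g) (prodPos h k) x ≤ prodPos (prodPos f h) (prodPos g k) x := by
  by_cases hx : ∃ y z : S, x = y * z
  · conv_lhs => rw [prodPos, if_pos hx]
    refine Real.sSup_le ?_ (prodPos_nonneg _ _
      (prodPos_nonneg f h hf0 hh0) (prodPos_nonneg g k hg0 hk0) x)
    rintro r ⟨y, z, hyz, rfl⟩
    by_cases hy : ∃ a b : S, y = a * b
    · by_cases hz : ∃ c d : S, z = c * d
      · -- both factor: use approximation argument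
        by_contra hcon
        push_neg at hcon
        have hPy : prodPos (prodPos f h) (prodPos g k) x < prodPos f g y :=
          lt_of_lt_of_le hcon (min_le_left _ _)
        have hQz : prodPos (prodPos f h) (prodPos g k) x < prodPos h k z :=
          lt_of_lt_of_le hcon (min_le_right _ _)
        rw [prodPos_eq_of_exists f g hy] at hPy
        rw [prodPos_eq_of_exists h k hz] at hQz
        obtain ⟨a0, b0, hab0⟩ := hy
        obtain ⟨c0, d0, hcd0⟩ := hz
        have hne1 : {r : ℝ | ∃ a b : S, y = a * b ∧ r = min (f a) (g b)}.Nonempty :=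
          ⟨min (f a0) (g b0), a0, b0, hab0, rfl⟩
        have hne2 : {r : ℝ | ∃ c d : S, z = c * d ∧ r = min (h c) (k d)}.Nonempty :=
          ⟨min (h c0) (k d0), c0, d0, hcd0, rfl⟩
        obtain ⟨u, ⟨a, b, hab, rfl⟩, hu⟩ := exists_lt_of_lt_csSup hne1 hPy
        obtain ⟨v, ⟨c, d, hcd, rfl⟩, hv⟩ := exists_lt_of_lt_csSup hne2 hQz
        have hx' : x = (a * c) * (b * d) := by
          rw [hyz, hab, hcd, medial_eq hinv]
        have key : min (min (f a) (g b)) (min (h c) (k d)) ≤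
            prodPos (prodPos f h) (prodPos g k) x := by
          have h1 : min (min (f a) (g b)) (min (h c) (k d)) =
              min (min (f a) (h c)) (min (g b) (k d)) := by
            rw [min_assoc, min_assoc]
            congr 1
            rw [← min_assoc, ← min_assoc, min_comm (g b) (h c)]
          rw [h1]
          have h2 : min (min (f a) (h c)) (min (g b) (k d)) ≤
              min (prodPos f h (a * c)) (prodPos g k (b * d)) :=
            min_le_min (min_le_prodPos f h hf1 a c) (min_le_prodPos g k hg1 b d)
          refine le_trans h2 ?_
          rw [prodPos_eq_of_exists (prodPos f h) (prodPos g k) ⟨a * c, b * d, hx'⟩]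
          exact le_csSup (prodPos_set_bddAbove _ _ (prodPos_le_one f h hf1) x)
            ⟨a * c, b * d, hx', rfl⟩
        have : prodPos (prodPos f h) (prodPos g k) x <
            prodPos (prodPos f h) (prodPos g k) x :=
          lt_of_lt_of_le (lt_min hu hv) key
        exact lt_irrefl _ this
      · have : prodPos h k z = 0 := by rw [prodPos, if_neg hz]
        calc min (prodPos f g y) (prodPos h k z) ≤ prodPos h k z := min_le_right _ _
          _ = 0 := this
          _ ≤ _ := prodPos_nonneg _ _
            (prodPos_nonneg f h hf0 hh0) (prodPos_nonneg g k hg0 hk0) x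
    · have : prodPos f g y = 0 := by rw [prodPos, if_neg hy]
      calc min (prodPos f g y) (prodPos h k z) ≤ prodPos f g y := min_le_left _ _
        _ = 0 := this
        _ ≤ _ := prodPos_nonneg _ _
          (prodPos_nonneg f h hf0 hh0) (prodPos_nonneg g k hg0 hk0) x
  · rw [prodPos, if_neg hx, prodPos, if_neg hx]

lemma prodPos_medial (hinv : ∀ a b c : S, a * b * c = c * b * a)
    (f g h k : S → ℝ)
    (hf0 : ∀ x, 0 ≤ f x) (hf1 : ∀ x, f x ≤ 1)
    (hg0 : ∀ x, 0 ≤ g x) (hg1 : ∀ x, g x ≤ 1)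
    (hh0 : ∀ x, 0 ≤ h x) (hh1 : ∀ x, h x ≤ 1)
    (hk0 : ∀ x, 0 ≤ k x) (hk1 : ∀ x, k x ≤ 1) (x : S) :
    prodPos (prodPos f g) (prodPos h k) x = prodPos (prodPos f h) (prodPos g k) x :=
  le_antisymm
    (prodPos_medial_le hinv f g h k hf0 hf1 hg0 hg1 hh0 hh1 hk0 hk1 x)
    (prodPos_medial_le hinv f h g k hf0 hf1 hh0 hh1 hg0 hg1 hk0 hk1 x)

lemma prodNeg_eq_neg_prodPos (f g : S → ℝ) (x : S) :
    prodNeg f g x = - prodPos (fun y => - f y) (fun y => - g y) x := by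
  rw [prodNeg, prodPos]
  split
  · rw [Real.sInf_def]
    congr 2
    ext r
    simp only [Set.mem_neg, Set.mem_setOf_eq]
    constructor
    · rintro ⟨y, z, hyz, hr⟩
      exact ⟨y, z, hyz, by rw [min_neg_neg, ← hr, neg_neg]⟩
    · rintro ⟨y, z, hyz, hr⟩
      exact ⟨y, z, hyz, by rw [min_neg_neg] at hr; rw [hr, neg_neg]⟩
  · simp

theorem prodPos_congr (f g f' g' : S → ℝ) (hf : ∀ x, f x = f' x) (hg : ∀ x, g x = g' x)
    (x : S) : prodPos f g x = prodPos f' g' x := by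
  have : f = f' := funext hf
  have : g = g' := funext hg
  subst this; subst ‹f = f'›; rfl

end Aux

theorem bvf_product_medial_law {S : Type*} [Mul S]
    (hinv : ∀ a b c : S, a * b * c = c * b * a)
    (μ1p μ2p μ3p μ4p μ1n μ2n μ3n μ4n : S → ℝ)
    (hμ1p : ∀ x : S, μ1p x ∈ Set.Icc (0 : ℝ) 1)
    (hμ2p : ∀ x : S, μ2p x ∈ Set.Icc (0 : ℝ) 1)
    (hμ3p : ∀ x : S, μ3p x ∈ Set.Icc (0 : ℝ) 1)
    (hμ4p : ∀ x : S, μ4p x ∈ Set.Icc (0 : ℝ) 1)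
    (hμ1n : ∀ x : S, μ1n x ∈ Set.Icc (-1 : ℝ) 0)
    (hμ2n : ∀ x : S, μ2n x ∈ Set.Icc (-1 : ℝ) 0)
    (hμ3n : ∀ x : S, μ3n x ∈ Set.Icc (-1 : ℝ) 0)
    (hμ4n : ∀ x : S, μ4n x ∈ Set.Icc (-1 : ℝ) 0) :
    (∀ x : S, prodPos (prodPos μ1p μ2p) (prodPos μ3p μ4p) x
      = prodPos (prodPos μ1p μ3p) (prodPos μ2p μ4p) x) ∧
    (∀ x : S, prodNeg (prodNeg μ1n μ2n) (prodNeg μ3n μ4n) x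
      = prodNeg (prodNeg μ1n μ3n) (prodNeg μ2n μ4n) x) := by
  constructor
  · intro x
    exact prodPos_medial hinv μ1p μ2p μ3p μ4p
      (fun y => (hμ1p y).1) (fun y => (hμ1p y).2)
      (fun y => (hμ2p y).1) (fun y => (hμ2p y).2)
      (fun y => (hμ3p y).1) (fun y => (hμ3p y).2)
      (fun y => (hμ4p y).1) (fun y => (hμ4p y).2) x
  · intro x
    have key : ∀ (f g h k : S → ℝ),
        (∀ y, f y ∈ Set.Icc (-1 : ℝ) 0) → (∀ y, g y ∈ Set.Icc (-1 : ℝ) 0) →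
        (∀ y, h y ∈ Set.Icc (-1 : ℝ) 0) → (∀ y, k y ∈ Set.Icc (-1 : ℝ) 0) →
        prodNeg (prodNeg f g) (prodNeg h k) x = prodNeg (prodNeg f h) (prodNeg g k) x := by
      intro f g h k hf hg hh hk
      rw [prodNeg_eq_neg_prodPos, prodNeg_eq_neg_prodPos]
      have e1 : ∀ y, (fun y => - prodNeg f g y) y = prodPos (fun y => -f y) (fun y => -g y) y := by
        intro y; simp [prodNeg_eq_neg_prodPos]
      have e2 : ∀ y, (fun y => - prodNeg h k y) y = prodPos (fun y => -h y) (fun y => -k y) y := by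
        intro y; simp [prodNeg_eq_neg_prodPos]
      have e3 : ∀ y, (fun y => - prodNeg f h y) y = prodPos (fun y => -f y) (fun y => -h y) y := by
        intro y; simp [prodNeg_eq_neg_prodPos]
      have e4 : ∀ y, (fun y => - prodNeg g k y) y = prodPos (fun y => -g y) (fun y => -k y) y := by
        intro y; simp [prodNeg_eq_neg_prodPos]
      rw [prodPos_congr _ _ _ _ e1 e2 x, prodPos_congr _ _ _ _ e3 e4 x]
      congr 1
      exact prodPos_medial hinv _ _ _ _
        (fun y => neg_nonneg.mpr (hf y).2) (fun y => neg_le.mpr (by simpa using (hf y).1))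
        (fun y => neg_nonneg.mpr (hg y).2) (fun y => neg_le.mpr (by simpa using (hg y).1))
        (fun y => neg_nonneg.mpr (hh y).2) (fun y => neg_le.mpr (by simpa using (hh y).1))
        (fun y => neg_nonneg.mpr (hk y).2) (fun y => neg_le.mpr (by simpa using (hk y).1)) x
    exact key μ1n μ2n μ3n μ4n hμ1n hμ2n hμ3n hμ4n
end

section
/- Let S be an LA-semigroup, let B₁ be a BVF-right ideal of S and let B₂ be a BVF-left ideal of S. Then B₁∘B₂ ⊆ B₁∩B₂, i.e. (μ₁⁺∘μ₂⁺)(x) ≤ min(μ₁⁺(x), μ₂⁺(x)) and (μ₁⁻∘μ₂⁻)(x) ≥ max(μ₁⁻(x), μ₂⁻(x)) for all x ∈ S. -/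
theorem bvf_right_mul_left_subset_inter {S : Type*} [Mul S]
    (hinv : ∀ a b c : S, a * b * c = c * b * a)
    (μ1p μ1n μ2p μ2n : S → ℝ)
    (hμ1p : ∀ x : S, μ1p x ∈ Set.Icc (0 : ℝ) 1)
    (hμ1n : ∀ x : S, μ1n x ∈ Set.Icc (-1 : ℝ) 0)
    (hμ2p : ∀ x : S, μ2p x ∈ Set.Icc (0 : ℝ) 1)
    (hμ2n : ∀ x : S, μ2n x ∈ Set.Icc (-1 : ℝ) 0)
    (h1rp : ∀ x y : S, μ1p x ≤ μ1p (x * y))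
    (h1rn : ∀ x y : S, μ1n (x * y) ≤ μ1n x)
    (h2lp : ∀ x y : S, μ2p y ≤ μ2p (x * y))
    (h2ln : ∀ x y : S, μ2n (x * y) ≤ μ2n y) :
    (∀ x : S, prodPos μ1p μ2p x ≤ min (μ1p x) (μ2p x)) ∧
    (∀ x : S, max (μ1n x) (μ2n x) ≤ prodNeg μ1n μ2n x) := by 
    constructor
    · intro x
      unfold prodPos
      split_ifs with h
      · apply Real.sSup_le
        · rintro r ⟨y, z, rfl, rfl⟩
          exact le_min (min_le_left _ _ |>.trans (h1rp y z) |>.trans_eq rfl)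
            ((min_le_right _ _).trans (h2lp y z))
        · exact le_min (hμ1p x).1 (hμ2p x).1
      · exact le_min (hμ1p x).1 (hμ2p x).1
    · intro x
      unfold prodNeg
      split_ifs with h
      · apply Real.le_sInf
        · rintro r ⟨y, z, rfl, rfl⟩
          exact max_le ((h1rn y z).trans (le_max_left _ _))
            ((h2ln y z).trans (le_max_right _ _))
        · exact max_le (hμ1n x).2 (hμ2n x).2
      · exact max_le (hμ1n x).2 (hμ2n x).2
end

section
/- Let S be an LA-semigroup with a left identity e and let B be a BVF-left ideal of S. Then Γ∘B = B, i.e. (S_Γ⁺∘μB⁺)(x) = μB⁺(x) and (S_Γ⁻∘μB⁻)(x) = μB⁻(x) for all x ∈ S. -/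
theorem bvf_gamma_mul_left_ideal_eq {S : Type*} [Mul S]
    (hinv : ∀ a b c : S, a * b * c = c * b * a)
    (e : S) (he : ∀ x : S, e * x = x)
    (μp μn : S → ℝ)
    (hμp : ∀ x : S, μp x ∈ Set.Icc (0 : ℝ) 1)
    (hμn : ∀ x : S, μn x ∈ Set.Icc (-1 : ℝ) 0)
    (hlp : ∀ x y : S, μp y ≤ μp (x * y))
    (hln : ∀ x y : S, μn (x * y) ≤ μn y) :
    (∀ x : S, prodPos (fun _ : S => (1 : ℝ)) μp x = μp x) ∧
    (∀ x : S, prodNeg (fun _ : S => (-1 : ℝ)) μn x = μn x) := by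
  constructor
  · intro x
    rw [prodPos, if_pos ⟨e, x, (he x).symm⟩]
    have hub : ∀ r ∈ {r : ℝ | ∃ y z : S, x = y * z ∧ r = min ((fun _ : S => (1:ℝ)) y) (μp z)}, r ≤ μp x := by
      rintro r ⟨y, z, hx, rfl⟩
      calc min 1 (μp z) ≤ μp z := min_le_right _ _
        _ ≤ μp (y * z) := hlp y z
        _ = μp x := by rw [hx]
    have hmem : μp x ∈ {r : ℝ | ∃ y z : S, x = y * z ∧ r = min ((fun _ : S => (1:ℝ)) y) (μp z)} :=
      ⟨e, x, (he x).symm, by simp [min_eq_right (hμp x).2]⟩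
    exact le_antisymm (csSup_le ⟨μp x, hmem⟩ hub) (le_csSup ⟨μp x, hub⟩ hmem)
  · intro x
    rw [prodNeg, if_pos ⟨e, x, (he x).symm⟩]
    have hlb : ∀ r ∈ {r : ℝ | ∃ y z : S, x = y * z ∧ r = max ((fun _ : S => (-1:ℝ)) y) (μn z)}, μn x ≤ r := by
      rintro r ⟨y, z, hx, rfl⟩
      calc μn x = μn (y * z) := by rw [hx]
        _ ≤ μn z := hln y z
        _ ≤ max (-1) (μn z) := le_max_right _ _
    have hmem : μn x ∈ {r : ℝ | ∃ y z : S, x = y * z ∧ r = max ((fun _ : S => (-1:ℝ)) y) (μn z)} :=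
      ⟨e, x, (he x).symm, by simp [max_eq_right (hμn x).1]⟩
    exact le_antisymm (csInf_le ⟨μn x, hlb⟩ hmem) (le_csInf ⟨μn x, hmem⟩ hlb)
end

section
/- Let B be a BVF-subset of an LA-semigroup S. Then B is a BVF-generalized bi-ideal of S if and only if ((μB⁺∘S_Γ⁺)∘μB⁺)(x) ≤ μB⁺(x) and ((μB⁻∘S_Γ⁻)∘μB⁻)(x) ≥ μB⁻(x) for all x ∈ S. -/
section Aux

variable {S : Type*} [Mul S]

lemma posSet_bddAbove (f g : S → ℝ) (hg : ∀ z, g z ≤ 1) (x : S) :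
    BddAbove {r : ℝ | ∃ y z : S, x = y * z ∧ r = min (f y) (g z)} := by
  refine ⟨1, ?_⟩
  rintro r ⟨y, z, -, rfl⟩
  exact le_trans (min_le_right _ _) (hg z)

lemma negSet_bddBelow (f g : S → ℝ) (hg : ∀ z, -1 ≤ g z) (x : S) :
    BddBelow {r : ℝ | ∃ y z : S, x = y * z ∧ r = max (f y) (g z)} := by
  refine ⟨-1, ?_⟩
  rintro r ⟨y, z, -, rfl⟩
  exact le_trans (hg z) (le_max_right _ _)

end Aux

theorem bvf_generalized_bi_ideal_iff {S : Type*} [Mul S]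
    (hinv : ∀ a b c : S, a * b * c = c * b * a)
    (μp μn : S → ℝ)
    (hμp : ∀ x : S, μp x ∈ Set.Icc (0 : ℝ) 1)
    (hμn : ∀ x : S, μn x ∈ Set.Icc (-1 : ℝ) 0)
    :
    ((∀ x y z : S, min (μp x) (μp z) ≤ μp ((x * y) * z)) ∧
     (∀ x y z : S, μn ((x * y) * z) ≤ max (μn x) (μn z))) ↔
    ((∀ x : S, prodPos (prodPos μp (fun _ : S => (1 : ℝ))) μp x ≤ μp x) ∧
     (∀ x : S, μn x ≤ prodNeg (prodNeg μn (fun _ : S => (-1 : ℝ))) μn x)) := by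
  constructor
  · rintro ⟨hp, hn⟩
    constructor
    · intro x
      unfold prodPos
      split
      case isFalse => exact (hμp x).1
      case isTrue hfac =>
        apply Real.sSup_le _ (hμp x).1
        rintro r ⟨a, c, hac, rfl⟩
        split
        case isFalse =>
          exact le_trans (min_le_left _ _) (le_trans le_rfl (hμp x).1)
        case isTrue hfa =>
          by_contra hcon
          push_neg at hcon
          have hne : {r : ℝ | ∃ y z : S, a = y * z ∧ r = min (μp y) ((fun _ : S => (1:ℝ)) z)}.Nonempty := by
            obtain ⟨u, v, huv⟩ := hfa
            exact ⟨min (μp u) 1, u, v, huv, rfl⟩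
          have h1 : μp x < sSup {r : ℝ | ∃ y z : S, a = y * z ∧ r = min (μp y) ((fun _ : S => (1:ℝ)) z)} :=
            lt_of_lt_of_le hcon (min_le_left _ _)
          have h2 : μp x < μp c := lt_of_lt_of_le hcon (min_le_right _ _)
          obtain ⟨t, ⟨u, v, huv, rfl⟩, ht⟩ := exists_lt_of_lt_csSup hne h1
          have key : min (μp u) (μp c) ≤ μp x := by
            have := hp u v c
            rwa [← huv, ← hac] at this
          have : μp x < min (μp u) (μp c) := by
            refine lt_min ?_ h2
            exact lt_of_lt_of_le ht (min_le_left _ _)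
          linarith
    · intro x
      unfold prodNeg
      split
      case isFalse => exact (hμn x).2
      case isTrue hfac =>
        apply Real.le_sInf _ (hμn x).2
        rintro r ⟨a, c, hac, rfl⟩
        split
        case isFalse =>
          exact le_trans (hμn x).2 (le_max_left _ _)
        case isTrue hfa =>
          by_contra hcon
          push_neg at hcon
          have hne : {r : ℝ | ∃ y z : S, a = y * z ∧ r = max (μn y) ((fun _ : S => (-1:ℝ)) z)}.Nonempty := by
            obtain ⟨u, v, huv⟩ := hfa
            exact ⟨max (μn u) (-1), u, v, huv, rfl⟩
          have h1 : sInf {r : ℝ | ∃ y z : S, a = y * z ∧ r = max (μn y) ((fun _ : S => (-1:ℝ)) z)} < μn x :=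
            lt_of_le_of_lt (le_max_left _ _) hcon
          have h2 : μn c < μn x := lt_of_le_of_lt (le_max_right _ _) hcon
          obtain ⟨t, ⟨u, v, huv, rfl⟩, ht⟩ := exists_lt_of_csInf_lt hne h1
          have key : μn x ≤ max (μn u) (μn c) := by
            have := hn u v c
            rwa [← huv, ← hac] at this
          have : max (μn u) (μn c) < μn x := by
            refine max_lt ?_ h2
            exact lt_of_le_of_lt (le_max_left _ _) ht
          linarith
  · rintro ⟨hp, hn⟩
    constructor
    · intro x y z
      have h1 : μp x ≤ prodPos μp (fun _ : S => (1:ℝ)) (x * y) := by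
        unfold prodPos
        rw [if_pos ⟨x, y, rfl⟩]
        have : μp x = min (μp x) ((fun _ : S => (1:ℝ)) y) := (min_eq_left (hμp x).2).symm
        rw [this]
        exact le_csSup (posSet_bddAbove _ _ (fun _ => le_rfl) _) ⟨x, y, rfl, rfl⟩
      set G : S → ℝ := prodPos μp (fun _ : S => (1:ℝ)) with hGdef
      have h2 : min (G (x * y)) (μp z) ≤
          prodPos G μp (x * y * z) := by
        unfold prodPos
        rw [if_pos ⟨x * y, z, rfl⟩]
        exact le_csSup (posSet_bddAbove _ _ (fun w => (hμp w).2) _) ⟨x * y, z, rfl, rfl⟩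
      calc min (μp x) (μp z) ≤ min (G (x * y)) (μp z) :=
            min_le_min h1 le_rfl
        _ ≤ prodPos G μp (x * y * z) := h2
        _ ≤ μp (x * y * z) := hp _
    · intro x y z
      have h1 : prodNeg μn (fun _ : S => (-1:ℝ)) (x * y) ≤ μn x := by
        unfold prodNeg
        rw [if_pos ⟨x, y, rfl⟩]
        have : μn x = max (μn x) ((fun _ : S => (-1:ℝ)) y) := (max_eq_left (hμn x).1).symm
        rw [this]
        exact csInf_le (negSet_bddBelow _ _ (fun _ => le_rfl) _) ⟨x, y, rfl, rfl⟩
      set G : S → ℝ := prodNeg μn (fun _ : S => (-1:ℝ)) with hGdef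
      have h2 : prodNeg G μn (x * y * z) ≤
          max (G (x * y)) (μn z) := by
        unfold prodNeg
        rw [if_pos ⟨x * y, z, rfl⟩]
        exact csInf_le (negSet_bddBelow _ _ (fun w => (hμn w).1) _) ⟨x * y, z, rfl, rfl⟩
      calc μn (x * y * z) ≤ prodNeg G μn (x * y * z) := hn _
        _ ≤ max (G (x * y)) (μn z) := h2
        _ ≤ max (μn x) (μn z) := max_le_max h1 le_rfl
end

section
/- Let S be an LA-semigroup with a left identity e and let B be a BVF-subset of S. Then B is a BVF-right ideal of S if and only if B is a BVF-interior ideal of S. -/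
theorem bvf_right_ideal_iff_interior_ideal {S : Type*} [Mul S]
    (hinv : ∀ a b c : S, a * b * c = c * b * a)
    (e : S) (he : ∀ x : S, e * x = x)
    (μp μn : S → ℝ)
    (hμp : ∀ x : S, μp x ∈ Set.Icc (0 : ℝ) 1)
    (hμn : ∀ x : S, μn x ∈ Set.Icc (-1 : ℝ) 0)
    :
    ((∀ x y : S, μp x ≤ μp (x * y)) ∧
     (∀ x y : S, μn (x * y) ≤ μn x)) ↔
    ((∀ x y z : S, μp y ≤ μp ((x * y) * z)) ∧
     (∀ x y z : S, μn ((x * y) * z) ≤ μn y)) := by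
  have medial : ∀ a b c d : S, (a * b) * (c * d) = (a * c) * (b * d) := by
    intro a b c d
    rw [hinv a b (c * d), hinv c d b, hinv (b * d) c a]
  have key : ∀ x y z : S, (x * y) * z = y * ((x * e) * z) := by
    intro x y z
    calc (x * y) * z = (z * y) * x := hinv x y z
      _ = ((e * z) * y) * x := by rw [he z]
      _ = ((y * z) * e) * x := by rw [hinv e z y]
      _ = (x * e) * (y * z) := hinv (y * z) e x
      _ = (e * (x * e)) * (y * z) := by rw [he]
      _ = (e * y) * ((x * e) * z) := medial e (x * e) y z
      _ = y * ((x * e) * z) := by rw [he]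
  constructor
  · rintro ⟨hp, hn⟩
    refine ⟨fun x y z => ?_, fun x y z => ?_⟩
    · rw [key]; exact hp y _
    · rw [key]; exact hn y _
  · rintro ⟨hp, hn⟩
    refine ⟨fun x y => ?_, fun x y => ?_⟩
    · have := hp e x y; rwa [he] at this
    · have := hn e x y; rwa [he] at this
end
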